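/- Let B := 2 β ⊗ₖ β. For every p ∈ ℝ³ with p ≠ 0: (a) B·P₊(p) = P₊(p)·B; (b) (M⁻·p + B·P₊(p))² = 4(|p|²+1) P₊(p); (c) the matrix 2√(|p|²+1)·P₊(p) is positive semidefinite and its square equals (M⁻·p + B·P₊(p))ᴴ (M⁻·p + B·P₊(p)); i.e. the matrix absolute value |M⁻·p + B·P₊(p)| equals 2(|p|²+1)^{1/2} P₊(p). -/
import Mathlib


noncomputable section
open MeasureTheory Matrix Complex Filter Topology
open scoped Kronecker ENNReal InnerProductSpace RealInnerProductSpace ComplexOrder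

/-- Pauli matrices -/
def σ1 : Matrix (Fin 2) (Fin 2) ℂ := !![0, 1; 1, 0]
def σ2 : Matrix (Fin 2) (Fin 2) ℂ := !![0, -I; I, 0]
def σ3 : Matrix (Fin 2) (Fin 2) ℂ := !![1, 0; 0, -1]

/-- Dirac alpha matrices in standard representation -/
def diracAlpha' (s : Matrix (Fin 2) (Fin 2) ℂ) : Matrix (Fin 4) (Fin 4) ℂ :=
  Matrix.reindex finSumFinEquiv finSumFinEquiv (Matrix.fromBlocks 0 s s 0)

def diracAlpha : Fin 3 → Matrix (Fin 4) (Fin 4) ℂ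
  | 0 => diracAlpha' σ1
  | 1 => diracAlpha' σ2
  | 2 => diracAlpha' σ3

def diracBeta : Matrix (Fin 4) (Fin 4) ℂ :=
  Matrix.reindex finSumFinEquiv finSumFinEquiv
    (Matrix.fromBlocks (1 : Matrix (Fin 2) (Fin 2) ℂ) 0 0 (-1 : Matrix (Fin 2) (Fin 2) ℂ))

abbrev R3 := EuclideanSpace ℝ (Fin 3)
abbrev C16 := EuclideanSpace ℂ (Fin 16)

/-- α·p -/
def alphaDot (p : R3) : Matrix (Fin 4) (Fin 4) ℂ :=
  ∑ j : Fin 3, (p j : ℂ) • diracAlpha j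

/-- reindexing 4×4 Kronecker products to 16×16 matrices -/
def kron16 (A B : Matrix (Fin 4) (Fin 4) ℂ) : Matrix (Fin 16) (Fin 16) ℂ :=
  Matrix.reindex finProdFinEquiv finProdFinEquiv (A ⊗ₖ B)

/-- M⁻·p -/
def Mminus (p : R3) : Matrix (Fin 16) (Fin 16) ℂ :=
  kron16 (alphaDot p) 1 - kron16 1 (alphaDot p)

/-- P·M⁺ -/
def MplusDot (P : R3) : Matrix (Fin 16) (Fin 16) ℂ :=
  (2⁻¹ : ℂ) • (kron16 (alphaDot P) 1 + kron16 1 (alphaDot P))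

/-- τ(p) -/
def tau (p : R3) : Matrix (Fin 16) (Fin 16) ℂ :=
  -((‖p‖ ^ 2 : ℝ) : ℂ)⁻¹ • kron16 (alphaDot p) (alphaDot p)

def Pplus (p : R3) : Matrix (Fin 16) (Fin 16) ℂ := (2⁻¹ : ℂ) • (1 + tau p)
def Pminus (p : R3) : Matrix (Fin 16) (Fin 16) ℂ := (2⁻¹ : ℂ) • (1 - tau p)

def Bmat : Matrix (Fin 16) (Fin 16) ℂ := (2 : ℂ) • kron16 diracBeta diracBeta

/- ### auxiliary lemmas -/

lemma alpha0_eq : diracAlpha 0 = !![0,0,0,1; 0,0,1,0; 0,1,0,0; 1,0,0,0] := by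
  ext i j; fin_cases i <;> fin_cases j <;> rfl

lemma alpha1_eq : diracAlpha 1 = !![0,0,0,-I; 0,0,I,0; 0,-I,0,0; I,0,0,0] := by
  ext i j; fin_cases i <;> fin_cases j <;> rfl

lemma alpha2_eq : diracAlpha 2 = !![0,0,1,0; 0,0,0,-1; 1,0,0,0; 0,-1,0,0] := by
  ext i j; fin_cases i <;> fin_cases j <;> rfl


lemma one2 : (1 : Matrix (Fin 2) (Fin 2) ℂ) = !![1,0;0,1] := by
  ext i j; fin_cases i <;> fin_cases j <;> simp [Matrix.one_apply]

lemma neg1 : (-1 : Matrix (Fin 2) (Fin 2) ℂ) = !![-1,0;0,-1] := by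
  ext i j; fin_cases i <;> fin_cases j <;> simp [Matrix.one_apply]

lemma beta_eq : diracBeta = !![1,0,0,0; 0,1,0,0; 0,0,-1,0; 0,0,0,-1] := by
  rw [diracBeta, neg1, one2]
  ext i j; fin_cases i <;> fin_cases j <;> rfl

lemma alphaDot_eq (p : R3) : alphaDot p =
    !![0, 0, (p 2 : ℂ), (p 0 : ℂ) - I * (p 1 : ℂ);
       0, 0, (p 0 : ℂ) + I * (p 1 : ℂ), -(p 2 : ℂ);
       (p 2 : ℂ), (p 0 : ℂ) - I * (p 1 : ℂ), 0, 0;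
       (p 0 : ℂ) + I * (p 1 : ℂ), -(p 2 : ℂ), 0, 0] := by
  rw [alphaDot, Fin.sum_univ_three, alpha0_eq, alpha1_eq, alpha2_eq]
  ext i j
  fin_cases i <;> fin_cases j <;>
    simp [Matrix.add_apply, Matrix.smul_apply, Matrix.vecHead, Matrix.vecTail] <;> ring

lemma norm_sq_eq (p : R3) :
    ((‖p‖ ^ 2 : ℝ) : ℂ) = (p 0 : ℂ) ^ 2 + (p 1 : ℂ) ^ 2 + (p 2 : ℂ) ^ 2 := by
  have h2 : (‖p‖ ^ 2 : ℝ) = p 0 ^ 2 + p 1 ^ 2 + p 2 ^ 2 := by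
    rw [EuclideanSpace.norm_eq, Real.sq_sqrt (by positivity)]
    simp [Fin.sum_univ_three, Real.norm_eq_abs, sq_abs]
  rw [h2]
  push_cast
  ring

lemma alphaDot_sq (p : R3) :
    alphaDot p * alphaDot p = ((‖p‖ ^ 2 : ℝ) : ℂ) • 1 := by
  rw [norm_sq_eq, alphaDot_eq]
  ext i j
  fin_cases i <;> fin_cases j <;>
    simp [Matrix.mul_apply, Fin.sum_univ_four, Matrix.one_apply,
      Matrix.vecHead, Matrix.vecTail] <;>
    first
      | rfl
      | ring1
      | linear_combination (-(p 1 : ℂ) ^ 2) * Complex.I_sq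
      | linear_combination ((p 1 : ℂ) ^ 2) * Complex.I_sq

lemma alphaDot_herm (p : R3) : (alphaDot p)ᴴ = alphaDot p := by
  rw [alphaDot_eq]
  ext i j
  fin_cases i <;> fin_cases j <;>
    simp [Matrix.conjTranspose_apply, Complex.conj_ofReal, Matrix.vecHead, Matrix.vecTail] <;>
    first | rfl | ring1

lemma beta_sq : diracBeta * diracBeta = 1 := by
  rw [beta_eq]
  ext i j
  fin_cases i <;> fin_cases j <;>
    simp [Matrix.mul_apply, Fin.sum_univ_four, Matrix.one_apply, Matrix.vecHead,
      Matrix.vecTail] <;> first | rfl | ring1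

lemma beta_herm : diracBetaᴴ = diracBeta := by
  rw [beta_eq]
  ext i j
  fin_cases i <;> fin_cases j <;>
    simp [Matrix.conjTranspose_apply, Matrix.vecHead, Matrix.vecTail] <;>
    first | rfl | ring1

set_option maxHeartbeats 1000000 in
lemma beta_anticomm (p : R3) :
    diracBeta * alphaDot p = -(alphaDot p * diracBeta) := by
  rw [beta_eq, alphaDot_eq]
  ext i j
  fin_cases i <;> fin_cases j <;>
    simp [Matrix.mul_apply, Fin.sum_univ_four, Matrix.neg_apply,
      Matrix.vecHead, Matrix.vecTail] <;> first | rfl | ring1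

lemma kron16_mul (A B C D : Matrix (Fin 4) (Fin 4) ℂ) :
    kron16 A B * kron16 C D = kron16 (A * C) (B * D) := by
  rw [kron16, kron16, kron16, Matrix.reindex_apply, Matrix.reindex_apply,
    Matrix.reindex_apply, Matrix.submatrix_mul_equiv, Matrix.mul_kronecker_mul]

lemma kron16_one : kron16 1 1 = 1 := by
  rw [kron16, Matrix.one_kronecker_one, Matrix.reindex_apply, Matrix.submatrix_one_equiv]

lemma kron16_smul_left (c : ℂ) (A B : Matrix (Fin 4) (Fin 4) ℂ) :
    kron16 (c • A) B = c • kron16 A B := by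
  simp [kron16, Matrix.smul_kronecker, Matrix.submatrix_smul]

lemma kron16_smul_right (c : ℂ) (A B : Matrix (Fin 4) (Fin 4) ℂ) :
    kron16 A (c • B) = c • kron16 A B := by
  simp [kron16, Matrix.kronecker_smul, Matrix.submatrix_smul]

lemma kron16_neg_left (A B : Matrix (Fin 4) (Fin 4) ℂ) :
    kron16 (-A) B = -kron16 A B := by
  have := kron16_smul_left (-1) A B
  simpa using this

lemma kron16_neg_right (A B : Matrix (Fin 4) (Fin 4) ℂ) :
    kron16 A (-B) = -kron16 A B := by
  have := kron16_smul_right (-1) A B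
  simpa using this

lemma kron16_conjTranspose (A B : Matrix (Fin 4) (Fin 4) ℂ) :
    (kron16 A B)ᴴ = kron16 Aᴴ Bᴴ := by
  have h : (A ⊗ₖ B)ᴴ = Aᴴ ⊗ₖ Bᴴ := by
    ext ⟨i, j⟩ ⟨k, l⟩
    simp [Matrix.conjTranspose_apply, Matrix.kroneckerMap_apply, star_mul']
  rw [kron16, kron16, Matrix.reindex_apply, Matrix.reindex_apply,
    Matrix.conjTranspose_submatrix, h]

/-- abstract key computation -/
lemma key_sq {n : Type*} [Fintype n] [DecidableEq n] (M B P : Matrix n n ℂ) (s : ℂ)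
    (hMP : M * P = M) (hPM : P * M = M) (hPP : P * P = P) (hBP : B * P = P * B)
    (hBB : B * B = (4 : ℂ) • 1) (hMB : M * B = -(B * M)) (hMM : M * M = (4 * s) • P) :
    (M + B * P) * (M + B * P) = (4 * s + 4) • P := by
  have h1 : (B * P) * (B * P) = (4 : ℂ) • P := by
    calc (B * P) * (B * P) = B * (P * B) * P := by noncomm_ring
    _ = (B * B) * (P * P) := by rw [← hBP]; noncomm_ring
    _ = (4 : ℂ) • P := by rw [hBB, hPP, smul_mul_assoc, one_mul]
  have h2 : M * (B * P) + (B * P) * M = 0 := by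
    have e1 : M * (B * P) = -(B * M) := by
      rw [← mul_assoc, hMB, neg_mul, mul_assoc, hMP]
    have e2 : (B * P) * M = B * M := by rw [mul_assoc, hPM]
    rw [e1, e2, neg_add_cancel]
  have expand : (M + B * P) * (M + B * P)
      = M * M + (M * (B * P) + (B * P) * M) + (B * P) * (B * P) := by noncomm_ring
  rw [expand, h2, add_zero, hMM, h1, ← add_smul]

set_option maxHeartbeats 1000000 in
/-- STATEMENT 9 -/
theorem stmt9 (p : R3) (hp : p ≠ 0) :
    Bmat * Pplus p = Pplus p * Bmat ∧
    (Mminus p + Bmat * Pplus p) * (Mminus p + Bmat * Pplus p)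
      = ((4 * (‖p‖ ^ 2 + 1) : ℝ) : ℂ) • Pplus p ∧
    (((2 * Real.sqrt (‖p‖ ^ 2 + 1) : ℝ) : ℂ) • Pplus p).PosSemidef ∧
    (((2 * Real.sqrt (‖p‖ ^ 2 + 1) : ℝ) : ℂ) • Pplus p) *
        (((2 * Real.sqrt (‖p‖ ^ 2 + 1) : ℝ) : ℂ) • Pplus p)
      = (Mminus p + Bmat * Pplus p)ᴴ * (Mminus p + Bmat * Pplus p) := by
  set A := alphaDot p with hA_def
  set s : ℂ := ((‖p‖ ^ 2 : ℝ) : ℂ) with hs_def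
  set K1 := kron16 A 1 with hK1_def
  set K2 := kron16 1 A with hK2_def
  set T := kron16 A A with hT_def
  set Bk := kron16 diracBeta diracBeta with hBk_def
  have hs : s ≠ 0 := by
    simp only [hs_def, ne_eq, Complex.ofReal_eq_zero]
    exact pow_ne_zero 2 (norm_ne_zero_iff.mpr hp)
  have hA2 : A * A = s • 1 := alphaDot_sq p
  have hAH : Aᴴ = A := alphaDot_herm p
  have hbA : diracBeta * A = -(A * diracBeta) := beta_anticomm p
  have hM : Mminus p = K1 - K2 := rfl
  have hBmat : Bmat = (2 : ℂ) • Bk := rfl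
  have htau : tau p = (-s⁻¹) • T := rfl
  have hK11 : K1 * K1 = s • 1 := by
    rw [hK1_def, kron16_mul, hA2, one_mul, kron16_smul_left, kron16_one]
  have hK22 : K2 * K2 = s • 1 := by
    rw [hK2_def, kron16_mul, hA2, one_mul, kron16_smul_right, kron16_one]
  have hK12 : K1 * K2 = T := by
    rw [hK1_def, hK2_def, kron16_mul, one_mul, mul_one, hT_def]
  have hK21 : K2 * K1 = T := by
    rw [hK1_def, hK2_def, kron16_mul, one_mul, mul_one, hT_def]
  have hK1T : K1 * T = s • K2 := by
    rw [hK1_def, hT_def, kron16_mul, hA2, one_mul, kron16_smul_left, hK2_def]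
  have hK2T : K2 * T = s • K1 := by
    rw [hK2_def, hT_def, kron16_mul, hA2, one_mul, kron16_smul_right, hK1_def]
  have hTT : T * T = (s * s) • 1 := by
    rw [hT_def, kron16_mul, hA2, kron16_smul_left, kron16_smul_right, kron16_one, smul_smul]
  have hBkT : Bk * T = T * Bk := by
    rw [hBk_def, hT_def, kron16_mul, kron16_mul, hbA, kron16_neg_left, kron16_neg_right, neg_neg]
  have hBkK1 : Bk * K1 = -(K1 * Bk) := by
    rw [hBk_def, hK1_def, kron16_mul, kron16_mul, one_mul, mul_one, hbA, kron16_neg_left]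
  have hBkK2 : Bk * K2 = -(K2 * Bk) := by
    rw [hBk_def, hK2_def, kron16_mul, kron16_mul, one_mul, mul_one, hbA, kron16_neg_right]
  have hBkBk : Bk * Bk = 1 := by
    rw [hBk_def, kron16_mul, beta_sq, kron16_one]
  have hMT : Mminus p * T = (-s) • Mminus p := by
    rw [hM, sub_mul, hK1T, hK2T]
    module
  have hTM : T * Mminus p = (-s) • Mminus p := by
    have hTK1 : T * K1 = s • K2 := by
      rw [hT_def, hK1_def, kron16_mul, hA2, mul_one, kron16_smul_left, hK2_def]
    have hTK2 : T * K2 = s • K1 := by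
      rw [hT_def, hK2_def, kron16_mul, hA2, mul_one, kron16_smul_right, hK1_def]
    rw [hM, mul_sub, hTK1, hTK2]
    module
  have hsc : (-s⁻¹) * (-s) = 1 := by field_simp
  have hMtau : Mminus p * tau p = Mminus p := by
    rw [htau, Matrix.mul_smul, hMT, smul_smul, hsc, one_smul]
  have htauM : tau p * Mminus p = Mminus p := by
    rw [htau, Matrix.smul_mul, hTM, smul_smul, hsc, one_smul]
  have hMP : Mminus p * Pplus p = Mminus p := by
    rw [Pplus, Matrix.mul_smul, mul_add, mul_one, hMtau, ← two_smul ℂ, smul_smul]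
    norm_num
  have hPM : Pplus p * Mminus p = Mminus p := by
    rw [Pplus, Matrix.smul_mul, add_mul, one_mul, htauM, ← two_smul ℂ, smul_smul]
    norm_num
  have htt : tau p * tau p = 1 := by
    rw [htau, Matrix.smul_mul, Matrix.mul_smul, hTT]
    match_scalars
    field_simp
  have hPP : Pplus p * Pplus p = Pplus p := by
    rw [Pplus, Matrix.smul_mul, Matrix.mul_smul, smul_smul, add_mul, one_mul, mul_add,
      mul_one, htt]
    match_scalars <;> norm_num
  have hBtau : Bmat * tau p = tau p * Bmat := by
    rw [hBmat, htau, Matrix.smul_mul, Matrix.mul_smul, Matrix.smul_mul, Matrix.mul_smul,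
      hBkT, smul_smul, smul_smul, mul_comm]
  have hBP : Bmat * Pplus p = Pplus p * Bmat := by
    rw [Pplus, Matrix.mul_smul, Matrix.smul_mul, mul_add, add_mul, mul_one, one_mul, hBtau]
  have hBB : Bmat * Bmat = (4 : ℂ) • 1 := by
    rw [hBmat, Matrix.smul_mul, Matrix.mul_smul, hBkBk, smul_smul]
    norm_num
  have hBkM : Bk * Mminus p = -(Mminus p * Bk) := by
    rw [hM, mul_sub, sub_mul, hBkK1, hBkK2]
    abel
  have hMB : Mminus p * Bmat = -(Bmat * Mminus p) := by
    rw [hBmat, Matrix.mul_smul, Matrix.smul_mul, hBkM]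
    simp
  have hMM : Mminus p * Mminus p = (4 * s) • Pplus p := by
    rw [hM, sub_mul, mul_sub, mul_sub, hK11, hK22, hK12, hK21, Pplus, htau]
    match_scalars <;> field_simp <;> ring
  have hb : (Mminus p + Bmat * Pplus p) * (Mminus p + Bmat * Pplus p)
      = ((4 * (‖p‖ ^ 2 + 1) : ℝ) : ℂ) • Pplus p := by
    rw [key_sq (Mminus p) Bmat (Pplus p) s hMP hPM hPP hBP hBB hMB hMM]
    congr 1
    rw [hs_def]
    push_cast
    ring
  -- hermiticity
  have hTH : Tᴴ = T := by rw [hT_def, kron16_conjTranspose, hAH]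
  have htauH : (tau p)ᴴ = tau p := by
    rw [htau, Matrix.conjTranspose_smul, hTH]
    congr 1
    rw [hs_def]
    simp [Complex.conj_ofReal]
  have hPH : (Pplus p)ᴴ = Pplus p := by
    rw [Pplus, Matrix.conjTranspose_smul, Matrix.conjTranspose_add, Matrix.conjTranspose_one,
      htauH]
    congr 1
    simp
  have hMH : (Mminus p)ᴴ = Mminus p := by
    rw [hM, Matrix.conjTranspose_sub, hK1_def, hK2_def, kron16_conjTranspose,
      kron16_conjTranspose, hAH, Matrix.conjTranspose_one]
  have hBH : Bmatᴴ = Bmat := by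
    rw [hBmat, Matrix.conjTranspose_smul, hBk_def, kron16_conjTranspose, beta_herm]
    congr 1
    simp
  have hXH : (Mminus p + Bmat * Pplus p)ᴴ = Mminus p + Bmat * Pplus p := by
    rw [Matrix.conjTranspose_add, Matrix.conjTranspose_mul, hMH, hPH, hBH, ← hBP]
  -- positivity
  have hx0 : (0 : ℝ) ≤ ‖p‖ ^ 2 + 1 := by positivity
  set c : ℝ := 2 * Real.sqrt (‖p‖ ^ 2 + 1) with hc_def
  have hc0 : (0 : ℝ) ≤ c := by positivity
  set t : ℝ := Real.sqrt c with ht_def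
  have htc : t * t = c := Real.mul_self_sqrt hc0
  have hfact : ((c : ℝ) : ℂ) • Pplus p = ((t : ℝ) : ℂ) • Pplus p * (((t : ℝ) : ℂ) • Pplus p) := by
    rw [Matrix.smul_mul, Matrix.mul_smul, smul_smul, hPP, ← Complex.ofReal_mul, htc]
  have hpsd : (((c : ℝ) : ℂ) • Pplus p).PosSemidef := by
    have hherm : (((t : ℝ) : ℂ) • Pplus p)ᴴ = ((t : ℝ) : ℂ) • Pplus p := by
      rw [Matrix.conjTranspose_smul, hPH]
      congr 1
      simp [Complex.conj_ofReal]
    rw [hfact]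
    nth_rewrite 1 [← hherm]
    exact Matrix.posSemidef_conjTranspose_mul_self (((t : ℝ) : ℂ) • Pplus p)
  have hcc : c * c = 4 * (‖p‖ ^ 2 + 1) := by
    rw [hc_def]
    rw [show 2 * Real.sqrt (‖p‖ ^ 2 + 1) * (2 * Real.sqrt (‖p‖ ^ 2 + 1))
      = 4 * (Real.sqrt (‖p‖ ^ 2 + 1) * Real.sqrt (‖p‖ ^ 2 + 1)) by ring,
      Real.mul_self_sqrt hx0]
  refine ⟨hBP, hb, hpsd, ?_⟩
  rw [hXH, hb, Matrix.smul_mul, Matrix.mul_smul, smul_smul, hPP, ← Complex.ofReal_mul, hcc]
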